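/- For every r-tuple F = (F_1,…,F_r) of formal power series in R[[x_1,…,x_r]] there exists a unique r-tuple Φ = (Φ_1,…,Φ_r) of elements of A satisfying the functional equation Φ_m = F_m(X + SΦ) for all m, where X + SΦ denotes the r-tuple (x_i + Σ_{j=1}^r s_{ij}Φ_j)_{i=1,…,r}. -/

import Mathlib

/-- Index type for the variables `s_{ij}`, `1 ≤ i ≤ j ≤ r`. -/
def SVar (r : ℕ) := {p : Fin r × Fin r // p.1 ≤ p.2}

instance {r : ℕ} : DecidableEq (SVar r) :=
  inferInstanceAs (DecidableEq {p : Fin r × Fin r // p.1 ≤ p.2})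

instance {r : ℕ} : Fintype (SVar r) :=
  inferInstanceAs (Fintype {p : Fin r × Fin r // p.1 ≤ p.2})

/-- The index of the variable `s_{ij} = s_{ji}` for arbitrary `i j`. -/
def sIdx {r : ℕ} (i j : Fin r) : SVar r :=
  if h : i ≤ j then ⟨(i, j), h⟩ else ⟨(j, i), (le_total i j).resolve_left h⟩

/-- Formal partial derivative `∂f/∂x_i` of a multivariate formal power series:
the coefficient of `∂f/∂x_i` at a monomial `m` is `(m i + 1) · (coeff of f at m + {i})`. -/
noncomputable def pd {σ : Type*} (R : Type*) [CommSemiring R]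
    (i : σ) (f : MvPowerSeries σ R) : MvPowerSeries σ R :=
  fun m => (((m i) + 1 : ℕ) : R) * MvPowerSeries.coeff (R := R) (m + Finsupp.single i 1) f

/-- Substitution of `s_{ij} = 0` for all `i ≤ j`: restriction to the `x`-variables. -/
noncomputable def resS0 {r : ℕ} {R : Type*} [CommSemiring R]
    (f : MvPowerSeries (Fin r ⊕ SVar r) R) : MvPowerSeries (Fin r) R :=
  fun m => MvPowerSeries.coeff (R := R) (Finsupp.mapDomain Sum.inl m) f

/-- Total degree of a monomial. -/
def mdeg {σ : Type*} (m : σ →₀ ℕ) : ℕ := m.sum fun _ e => e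

/-- Formal substitution `F(G) = Σ_m (coeff_m F) · ∏_i G_i^{m_i}`, for tuples `G` whose
components have zero constant coefficient, computed coefficientwise: since
`∏ G_i^{m_i}` has order `≥ |m|`, only multi-indices `m` with `|m| ≤ deg μ` (in
particular `m ≤ (deg μ, …, deg μ)`) contribute to the coefficient at `μ`. -/
noncomputable def substT {σ τ R : Type*} [Fintype σ] [DecidableEq σ] [CommRing R]
    (F : MvPowerSeries σ R) (G : σ → MvPowerSeries τ R) : MvPowerSeries τ R :=
  fun μ => MvPowerSeries.coeff (R := R) μ
    (∑ m ∈ Finset.Iic (Finsupp.equivFunOnFinite.symm (fun _ : σ => mdeg μ)),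
      MvPowerSeries.coeff (R := R) m F • ∏ i, (G i) ^ (m i))

/-!
The map `Φ ↦ F(X + SΦ)` is a contraction for the filtration by order: if `Φ` and `Ψ` agree
in total degree `< n`, then so do the arguments `X + SΦ` and `X + SΨ` in degree `< n + 1`,
because every `s_{ij}` has degree one, and substitution preserves such agreement. Iterating
from `0` therefore stabilises degree by degree, and the limit is the unique fixed point.
-/

namespace MvPowerSeries

open Finsupp

variable {σ R : Type*} [CommRing R]

def orderGeIdeal (n : ℕ) : Ideal (MvPowerSeries σ R) where
  carrier := {f | (n : ℕ∞) ≤ f.order}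
  add_mem' ha hb := (le_min ha hb).trans min_order_le_add
  zero_mem' := by simp [order_zero]
  smul_mem' _ _ hf := hf.trans (le_add_self.trans le_order_mul)

theorem mem_orderGeIdeal {n : ℕ} {f : MvPowerSeries σ R} :
    f ∈ orderGeIdeal n ↔ (n : ℕ∞) ≤ f.order :=
  Iff.rfl

theorem smodEq_orderGeIdeal_iff {n : ℕ} {f g : MvPowerSeries σ R} :
    f ≡ g [SMOD orderGeIdeal n] ↔ ∀ d, degree d < n → coeff d f = coeff d g := by
  simp only [SModEq.sub_mem, mem_orderGeIdeal, ← sub_eq_zero (a := coeff _ f), ← map_sub]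
  exact ⟨fun h d hd => coeff_of_lt_order ((Nat.cast_lt.mpr hd).trans_le h), nat_le_order⟩

theorem smodEq_orderGeIdeal_zero (f g : MvPowerSeries σ R) :
    f ≡ g [SMOD orderGeIdeal 0] :=
  smodEq_orderGeIdeal_iff.mpr fun _ hd => absurd hd (Nat.not_lt_zero _)

theorem orderGeIdeal_antitone : Antitone (orderGeIdeal (σ := σ) (R := R)) :=
  fun _ _ hmn _ hf =>
    mem_orderGeIdeal.mpr ((Nat.cast_le.mpr hmn).trans (mem_orderGeIdeal.mp hf))

theorem eq_of_forall_smodEq_orderGeIdeal {f g : MvPowerSeries σ R}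
    (h : ∀ n, f ≡ g [SMOD orderGeIdeal n]) : f = g :=
  ext fun d => smodEq_orderGeIdeal_iff.mp (h (degree d + 1)) d (Nat.lt_succ_self _)

theorem X_mul_smodEq_orderGeIdeal {n : ℕ} (s : σ) {f g : MvPowerSeries σ R}
    (h : f ≡ g [SMOD orderGeIdeal n]) :
    X s * f ≡ X s * g [SMOD orderGeIdeal (n + 1)] := by
  rw [SModEq.sub_mem, ← mul_sub, mem_orderGeIdeal, Nat.cast_succ, add_comm]
  have hX : 1 ≤ (X s : MvPowerSeries σ R).order :=
    one_le_order_iff_constCoeff_eq_zero.mpr (constantCoeff_X s)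
  exact (add_le_add hX (SModEq.sub_mem.mp h)).trans le_order_mul

def IsOrderContracting {ι : Type*} (T : (ι → MvPowerSeries σ R) → ι → MvPowerSeries σ R) :
    Prop :=
  ∀ n Φ Ψ, (∀ j, Φ j ≡ Ψ j [SMOD orderGeIdeal n]) →
    ∀ j, T Φ j ≡ T Ψ j [SMOD orderGeIdeal (n + 1)]

namespace IsOrderContracting

variable {ι : Type*} {T : (ι → MvPowerSeries σ R) → ι → MvPowerSeries σ R}

theorem smodEq_iterate (hT : IsOrderContracting T) (k : ℕ) (Φ Ψ : ι → MvPowerSeries σ R)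
    (j : ι) : T^[k] Φ j ≡ T^[k] Ψ j [SMOD orderGeIdeal k] := by
  induction k generalizing j with
  | zero => exact smodEq_orderGeIdeal_zero _ _
  | succ k ih =>
    rw [Function.iterate_succ_apply', Function.iterate_succ_apply']
    exact hT k _ _ ih j

theorem eq_of_isFixedPt (hT : IsOrderContracting T) {Φ Ψ : ι → MvPowerSeries σ R}
    (hΦ : T Φ = Φ) (hΨ : T Ψ = Ψ) : Φ = Ψ := by
  funext j
  refine eq_of_forall_smodEq_orderGeIdeal fun k => ?_
  simpa only [Function.iterate_fixed hΦ, Function.iterate_fixed hΨ] using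
    hT.smodEq_iterate k Φ Ψ j

-- By `smodEq_iterate`, the iterates `T^[k] 0` no longer change in degrees `< k`.
noncomputable def limit (T : (ι → MvPowerSeries σ R) → ι → MvPowerSeries σ R) :
    ι → MvPowerSeries σ R :=
  fun j d => coeff d (T^[degree d + 1] 0 j)

theorem limit_smodEq_iterate (hT : IsOrderContracting T) (k : ℕ) (j : ι) :
    limit T j ≡ T^[k] 0 j [SMOD orderGeIdeal k] := by
  refine smodEq_orderGeIdeal_iff.mpr fun d hd => ?_
  obtain ⟨m, hm⟩ := Nat.exists_eq_add_of_le (Nat.succ_le_of_lt hd)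
  have hcauchy := hT.smodEq_iterate (degree d + 1) 0 (T^[m] 0) j
  rw [← Function.iterate_add_apply, ← hm] at hcauchy
  exact smodEq_orderGeIdeal_iff.mp hcauchy d (Nat.lt_succ_self _)

theorem isFixedPt_limit (hT : IsOrderContracting T) : T (limit T) = limit T := by
  funext j
  refine eq_of_forall_smodEq_orderGeIdeal fun k => ?_
  refine SModEq.mono (orderGeIdeal_antitone k.le_succ) ?_
  have hstep := hT k _ _ (hT.limit_smodEq_iterate k) j
  rw [← Function.iterate_succ_apply' T k 0] at hstep
  exact hstep.trans (hT.limit_smodEq_iterate (k + 1) j).symm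

theorem existsUnique_isFixedPt (hT : IsOrderContracting T) : ∃! Φ, T Φ = Φ :=
  ⟨limit T, hT.isFixedPt_limit, fun _ hΨ => hT.eq_of_isFixedPt hΨ hT.isFixedPt_limit⟩

end IsOrderContracting

theorem substT_smodEq_orderGeIdeal {τ : Type*} [Fintype σ] [DecidableEq σ] {n : ℕ}
    (F : MvPowerSeries σ R) {G G' : σ → MvPowerSeries τ R}
    (h : ∀ i, G i ≡ G' i [SMOD orderGeIdeal n]) :
    substT F G ≡ substT F G' [SMOD orderGeIdeal n] := by
  refine smodEq_orderGeIdeal_iff.mpr fun μ hμ => ?_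
  refine smodEq_orderGeIdeal_iff.mp (SModEq.sum fun m _ => ?_) μ hμ
  rw [smul_eq_C_mul, smul_eq_C_mul]
  exact SModEq.rfl.mul (SModEq.prod fun i _ => (h i).pow _)

end MvPowerSeries

theorem stmt5_general {r : ℕ} (R : Type*) [CommRing R]
    (F : Fin r → MvPowerSeries (Fin r) R) :
    ∃! Φ : Fin r → MvPowerSeries (Fin r ⊕ SVar r) R,
      ∀ m, Φ m = substT (F m)
        (fun i => MvPowerSeries.X (Sum.inl i) +
          ∑ j, MvPowerSeries.X (Sum.inr (sIdx i j)) * Φ j) := by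
  open MvPowerSeries in
  have hT : IsOrderContracting fun (Φ : Fin r → MvPowerSeries (Fin r ⊕ SVar r) R) m =>
      substT (F m) fun i => X (Sum.inl i) + ∑ j, X (Sum.inr (sIdx i j)) * Φ j :=
    fun n Φ Ψ h m => substT_smodEq_orderGeIdeal (F m) fun i =>
      SModEq.rfl.add (SModEq.sum fun j _ => X_mul_smodEq_orderGeIdeal _ (h j))
  refine (existsUnique_congr fun Φ => ?_).mp hT.existsUnique_isFixedPt
  rw [funext_iff]
  exact forall_congr' fun _ => eq_comm

/-- For every `r`-tuple `F` of power series in `R[[x_1,…,x_r]]` there is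
a unique `r`-tuple `Φ` of elements of `A` with `Φ_m = F_m(X + SΦ)` for all `m`. -/
theorem stmt5 {r : ℕ} (hr : 1 ≤ r) (R : Type*) [CommRing R] [Algebra ℚ R]
    (F : Fin r → MvPowerSeries (Fin r) R) :
    ∃! Φ : Fin r → MvPowerSeries (Fin r ⊕ SVar r) R,
      ∀ m, Φ m = substT (F m)
        (fun i => MvPowerSeries.X (Sum.inl i) +
          ∑ j, MvPowerSeries.X (Sum.inr (sIdx i j)) * Φ j) :=
  stmt5_general R F
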